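/- (The potential and the mean curvature vector.) Let U : Ω → ℂ, let ψ = (ψ₁,ψ₂) solve Dψ = 0 and φ = (φ₁,φ₂) solve D^∨φ = 0, and let x : Ω → ℝ⁴ be the corresponding Weierstrass surface, i.e. ∂x = (x¹_z, x²_z, x³_z, x⁴_z) with x¹_z = (i/2)(conj φ₂ conj ψ₂ + φ₁ψ₁), x²_z = (1/2)(conj φ₂ conj ψ₂ − φ₁ψ₁), x³_z = (1/2)(conj φ₂ ψ₁ + φ₁ conj ψ₂), x⁴_z = (i/2)(conj φ₂ ψ₁ − φ₁ conj ψ₂). Assume e^{2α} = (|ψ₁|² + |ψ₂|²)(|φ₁|² + |φ₂|²) > 0 and set H = 2 e^{−2α} ∂̄∂x (the mean curvature vector), n₁ = e^{−α}(−Im(ψ₂φ₁ − conj ψ₁ conj φ₂), −Re(conj ψ₁ conj φ₂ + ψ₂φ₁), Re(ψ₂ conj φ₂ − conj ψ₁ φ₁), −Im(conj ψ₁ φ₁ + ψ₂ conj φ₂)), n₂ = e^{−α}(Re(ψ₂φ₁ − conj ψ₁ conj φ₂), −Im(conj ψ₁ conj φ₂ + ψ₂φ₁), Im(ψ₂ conj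 φ₂ − conj ψ₁ φ₁), Re(conj ψ₁ φ₁ + ψ₂ conj φ₂)), and p = e^α (n₁ + i n₂). Then U = (1/2)⟨H, p⟩, where ⟨·,·⟩ is the complex-bilinear (Euclidean, not Hermitian) extension of the scalar product of ℝ⁴. -/

import Mathlib

open Complex Matrix Finset

noncomputable section

/-- Wirtinger derivative `∂f = ½(f_x − i f_y)`. -/
def wdz (f : ℂ → ℂ) (z : ℂ) : ℂ :=
  (1 / 2) * (fderiv ℝ f z 1 - Complex.I * fderiv ℝ f z Complex.I)

/-- Conjugate Wirtinger derivative `∂̄f = ½(f_x + i f_y)`. -/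
def wdzb (f : ℂ → ℂ) (z : ℂ) : ℂ :=
  (1 / 2) * (fderiv ℝ f z 1 + Complex.I * fderiv ℝ f z Complex.I)

/-- The Dirac equation `Dψ = 0` with potential `U` on `Ω`:
`∂ψ₂ + Uψ₁ = 0` and `−∂̄ψ₁ + Ūψ₂ = 0`. -/
def DiracEq (U ψ₁ ψ₂ : ℂ → ℂ) (Ω : Set ℂ) : Prop :=
  ∀ z ∈ Ω, wdz ψ₂ z + U z * ψ₁ z = 0 ∧
    -wdzb ψ₁ z + (starRingEnd ℂ) (U z) * ψ₂ z = 0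

def Gam : Matrix (Fin 2) (Fin 2) ℂ := !![0, 1; -1, 0]

def sig3 : Matrix (Fin 2) (Fin 2) ℂ := !![1, 0; 0, -1]

/-- The quaternionic matrix associated to a spinor. -/
def spinMat (ψ₁ ψ₂ : ℂ → ℂ) (z : ℂ) : Matrix (Fin 2) (Fin 2) ℂ :=
  !![ψ₁ z, -(starRingEnd ℂ) (ψ₂ z); ψ₂ z, (starRingEnd ℂ) (ψ₁ z)]

def wdzM (F : ℂ → Matrix (Fin 2) (Fin 2) ℂ) (z : ℂ) : Matrix (Fin 2) (Fin 2) ℂ :=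
  Matrix.of fun i j => wdz (fun w => F w i j) z

def wdzbM (F : ℂ → Matrix (Fin 2) (Fin 2) ℂ) (z : ℂ) : Matrix (Fin 2) (Fin 2) ℂ :=
  Matrix.of fun i j => wdzb (fun w => F w i j) z

/-- `S` is a primitive of `Γω(Φ,Ψ)` on `Ω`. -/
def IsPrimitive (Φ Ψ S : ℂ → Matrix (Fin 2) (Fin 2) ℂ) (Ω : Set ℂ) : Prop :=
  ∀ z ∈ Ω,
    wdzM S z = (-(Complex.I / 2)) • (Gam * (Φ z)ᵀ * (sig3 + 1) * Ψ z) ∧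
    wdzbM S z = (-(Complex.I / 2)) • (Gam * (Φ z)ᵀ * (sig3 - 1) * Ψ z)

def MatDiffOn (F : ℂ → Matrix (Fin 2) (Fin 2) ℂ) (Ω : Set ℂ) : Prop :=
  ∀ z ∈ Ω, ∀ i j, DifferentiableAt ℝ (fun w => F w i j) z

/-- A matrix solution of the Dirac equation: both columns solve `Dψ = 0`. -/
def MatDiracEq (U : ℂ → ℂ) (Ψ : ℂ → Matrix (Fin 2) (Fin 2) ℂ) (Ω : Set ℂ) : Prop :=
  ∀ j : Fin 2, DiracEq U (fun z => Ψ z 0 j) (fun z => Ψ z 1 j) Ω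

/-- The Weierstrass derivatives `x^k_z` of the Weierstrass representation. -/
def weierXz (ψ₁ ψ₂ φ₁ φ₂ : ℂ) : Fin 4 → ℂ :=
  ![(Complex.I / 2) * ((starRingEnd ℂ) φ₂ * (starRingEnd ℂ) ψ₂ + φ₁ * ψ₁),
    (1 / 2) * ((starRingEnd ℂ) φ₂ * (starRingEnd ℂ) ψ₂ - φ₁ * ψ₁),
    (1 / 2) * ((starRingEnd ℂ) φ₂ * ψ₁ + φ₁ * (starRingEnd ℂ) ψ₂),
    (Complex.I / 2) * ((starRingEnd ℂ) φ₂ * ψ₁ - φ₁ * (starRingEnd ℂ) ψ₂)]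

/-- Identification of `ℝ⁴` with `u(2)`. -/
def toU2 (x : Fin 4 → ℝ) : Matrix (Fin 2) (Fin 2) ℂ :=
  !![Complex.I * (x 2 : ℂ) + (x 3 : ℂ), -(x 0 : ℂ) - Complex.I * (x 1 : ℂ);
     (x 0 : ℂ) - Complex.I * (x 1 : ℂ), -Complex.I * (x 2 : ℂ) + (x 3 : ℂ)]


/-- The conformal factor `e^{2α} = (|ψ₁|² + |ψ₂|²)(|φ₁|² + |φ₂|²)`. -/
def weierE2a (ψ₁ ψ₂ φ₁ φ₂ : ℂ) : ℝ :=
  (Complex.normSq ψ₁ + Complex.normSq ψ₂) * (Complex.normSq φ₁ + Complex.normSq φ₂)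

/-- The normal vector `n₁` of the Weierstrass representation. -/
def weierN1 (ψ₁ ψ₂ φ₁ φ₂ : ℂ) : Fin 4 → ℝ := fun k =>
  (Real.sqrt (weierE2a ψ₁ ψ₂ φ₁ φ₂))⁻¹ *
    ![-(ψ₂ * φ₁ - (starRingEnd ℂ) ψ₁ * (starRingEnd ℂ) φ₂).im,
      -((starRingEnd ℂ) ψ₁ * (starRingEnd ℂ) φ₂ + ψ₂ * φ₁).re,
      (ψ₂ * (starRingEnd ℂ) φ₂ - (starRingEnd ℂ) ψ₁ * φ₁).re,
      -((starRingEnd ℂ) ψ₁ * φ₁ + ψ₂ * (starRingEnd ℂ) φ₂).im] k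

/-- The normal vector `n₂` of the Weierstrass representation. -/
def weierN2 (ψ₁ ψ₂ φ₁ φ₂ : ℂ) : Fin 4 → ℝ := fun k =>
  (Real.sqrt (weierE2a ψ₁ ψ₂ φ₁ φ₂))⁻¹ *
    ![(ψ₂ * φ₁ - (starRingEnd ℂ) ψ₁ * (starRingEnd ℂ) φ₂).re,
      -((starRingEnd ℂ) ψ₁ * (starRingEnd ℂ) φ₂ + ψ₂ * φ₁).im,
      (ψ₂ * (starRingEnd ℂ) φ₂ - (starRingEnd ℂ) ψ₁ * φ₁).im,
      ((starRingEnd ℂ) ψ₁ * φ₁ + ψ₂ * (starRingEnd ℂ) φ₂).re] k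

/-- The complex normal vector `p = e^α (n₁ + i n₂)`. -/
def weierP (ψ₁ ψ₂ φ₁ φ₂ : ℂ) : Fin 4 → ℂ := fun k =>
  (Real.sqrt (weierE2a ψ₁ ψ₂ φ₁ φ₂) : ℂ) *
    ((weierN1 ψ₁ ψ₂ φ₁ φ₂ k : ℂ) + Complex.I * (weierN2 ψ₁ ψ₂ φ₁ φ₂ k : ℂ))

/-!
Under the Dirac equations `∂ψ₂ = −Uψ₁`, `∂̄ψ₁ = Ūψ₂`, `∂φ₂ = −Ūφ₁`, `∂̄φ₁ = Uφ₂`, each component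
of `∂x` is a fixed linear combination of the four products `φ̄₂ψ̄₂, φ₁ψ₁, φ̄₂ψ₁, φ₁ψ̄₂`, so `∂̄∂x`
is the same combination of their `∂̄`-derivatives, each linear in `U` and `Ū`. In the pairing with
`p`, where the factors `e^{±α}` cancel, the `U`-terms add up to `U e^{2α}` and the `Ū`-terms cancel.
-/

section Wirtinger

variable {f g : ℂ → ℂ} {z : ℂ}

lemma wdzb_congr (h : f =ᶠ[nhds z] g) : wdzb f z = wdzb g z := by
  rw [wdzb, wdzb, h.fderiv_eq]

lemma wdzb_conj :
    wdzb (fun w => (starRingEnd ℂ) (f w)) z = (starRingEnd ℂ) (wdz f z) := by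
  have h (v : ℂ) : fderiv ℝ (fun w => (starRingEnd ℂ) (f w)) z v
      = (starRingEnd ℂ) (fderiv ℝ f z v) :=
    congrArg (· v) (fderiv_star (𝕜 := ℝ) (f := f) (x := z))
  simp only [wdz, wdzb, h, map_mul, map_sub, map_div₀, map_one, map_ofNat, conj_I]
  ring

lemma wdzb_mul (hf : DifferentiableAt ℝ f z) (hg : DifferentiableAt ℝ g z) :
    wdzb (fun w => f w * g w) z = wdzb f z * g z + f z * wdzb g z := by
  simp only [wdzb, fderiv_fun_mul hf hg, _root_.add_apply, _root_.smul_apply, smul_eq_mul]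
  ring

lemma wdzb_add (hf : DifferentiableAt ℝ f z) (hg : DifferentiableAt ℝ g z) :
    wdzb (fun w => f w + g w) z = wdzb f z + wdzb g z := by
  simp only [wdzb, fderiv_fun_add hf hg, _root_.add_apply]
  ring

lemma wdzb_sub (hf : DifferentiableAt ℝ f z) (hg : DifferentiableAt ℝ g z) :
    wdzb (fun w => f w - g w) z = wdzb f z - wdzb g z := by
  simp only [wdzb, fderiv_fun_sub hf hg, _root_.sub_apply]
  ring

lemma wdzb_const_mul (c : ℂ) (hf : DifferentiableAt ℝ f z) :
    wdzb (fun w => c * f w) z = c * wdzb f z := by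
  simp only [wdzb, fderiv_const_mul hf c, _root_.smul_apply, smul_eq_mul]
  ring

end Wirtinger

def weierVec (a b c d : ℂ) : Fin 4 → ℂ :=
  ![(I / 2) * (a + b), (1 / 2) * (a - b), (1 / 2) * (c + d), (I / 2) * (c - d)]

lemma weierXz_eq_weierVec (ψ₁ ψ₂ φ₁ φ₂ : ℂ) :
    weierXz ψ₁ ψ₂ φ₁ φ₂ =
      weierVec ((starRingEnd ℂ) φ₂ * (starRingEnd ℂ) ψ₂) (φ₁ * ψ₁)
        ((starRingEnd ℂ) φ₂ * ψ₁) (φ₁ * (starRingEnd ℂ) ψ₂) :=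
  rfl

lemma wdzb_weierVec {a b c d : ℂ → ℂ} {z : ℂ} (ha : DifferentiableAt ℝ a z)
    (hb : DifferentiableAt ℝ b z) (hc : DifferentiableAt ℝ c z) (hd : DifferentiableAt ℝ d z)
    (k : Fin 4) :
    wdzb (fun w => weierVec (a w) (b w) (c w) (d w) k) z =
      weierVec (wdzb a z) (wdzb b z) (wdzb c z) (wdzb d z) k := by
  fin_cases k
  · exact (wdzb_const_mul _ (ha.add hb)).trans (congrArg _ (wdzb_add ha hb))
  · exact (wdzb_const_mul _ (ha.sub hb)).trans (congrArg _ (wdzb_sub ha hb))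
  · exact (wdzb_const_mul _ (hc.add hd)).trans (congrArg _ (wdzb_add hc hd))
  · exact (wdzb_const_mul _ (hc.sub hd)).trans (congrArg _ (wdzb_sub hc hd))

def weierXzzb (u ψ₁ ψ₂ φ₁ φ₂ : ℂ) : Fin 4 → ℂ :=
  weierVec
    (-(u * (starRingEnd ℂ) φ₁ * (starRingEnd ℂ) ψ₂)
      - (starRingEnd ℂ) u * (starRingEnd ℂ) φ₂ * (starRingEnd ℂ) ψ₁)
    (u * φ₂ * ψ₁ + (starRingEnd ℂ) u * φ₁ * ψ₂)
    (-(u * (starRingEnd ℂ) φ₁ * ψ₁) + (starRingEnd ℂ) u * (starRingEnd ℂ) φ₂ * ψ₂)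
    (u * φ₂ * (starRingEnd ℂ) ψ₂ - (starRingEnd ℂ) u * φ₁ * (starRingEnd ℂ) ψ₁)

section Dirac

variable {U ψ₁ ψ₂ φ₁ φ₂ : ℂ → ℂ} {Ω : Set ℂ} {z : ℂ}

lemma DiracEq.wdz_snd (h : DiracEq U ψ₁ ψ₂ Ω) (hz : z ∈ Ω) : wdz ψ₂ z = -(U z * ψ₁ z) :=
  eq_neg_of_add_eq_zero_left (h z hz).1

lemma DiracEq.wdzb_fst (h : DiracEq U ψ₁ ψ₂ Ω) (hz : z ∈ Ω) :
    wdzb ψ₁ z = (starRingEnd ℂ) (U z) * ψ₂ z := by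
  linear_combination -(h z hz).2

lemma wdzb_weierXz (hψ : DiracEq U ψ₁ ψ₂ Ω)
    (hφ : DiracEq (fun z => (starRingEnd ℂ) (U z)) φ₁ φ₂ Ω) (hz : z ∈ Ω)
    (hψ₁ : DifferentiableAt ℝ ψ₁ z) (hψ₂ : DifferentiableAt ℝ ψ₂ z)
    (hφ₁ : DifferentiableAt ℝ φ₁ z) (hφ₂ : DifferentiableAt ℝ φ₂ z) (k : Fin 4) :
    wdzb (fun w => weierXz (ψ₁ w) (ψ₂ w) (φ₁ w) (φ₂ w) k) z =
      weierXzzb (U z) (ψ₁ z) (ψ₂ z) (φ₁ z) (φ₂ z) k := by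
  have hψ₂' : DifferentiableAt ℝ (fun w => (starRingEnd ℂ) (ψ₂ w)) z := hψ₂.star
  have hφ₂' : DifferentiableAt ℝ (fun w => (starRingEnd ℂ) (φ₂ w)) z := hφ₂.star
  simp only [weierXz_eq_weierVec]
  rw [wdzb_weierVec (hφ₂'.fun_mul hψ₂') (hφ₁.fun_mul hψ₁) (hφ₂'.fun_mul hψ₁) (hφ₁.fun_mul hψ₂'),
    wdzb_mul hφ₂' hψ₂', wdzb_mul hφ₁ hψ₁, wdzb_mul hφ₂' hψ₁, wdzb_mul hφ₁ hψ₂', wdzb_conj,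
    wdzb_conj, hψ.wdz_snd hz, hψ.wdzb_fst hz, hφ.wdz_snd hz, hφ.wdzb_fst hz]
  simp only [weierXzzb, map_mul, map_neg, conj_conj]
  congr 1 <;> ring

end Dirac

lemma weierP_eq {ψ₁ ψ₂ φ₁ φ₂ : ℂ} (h : 0 < weierE2a ψ₁ ψ₂ φ₁ φ₂) :
    weierP ψ₁ ψ₂ φ₁ φ₂ =
      ![I * (ψ₂ * φ₁ - (starRingEnd ℂ) ψ₁ * (starRingEnd ℂ) φ₂),
        -((starRingEnd ℂ) ψ₁ * (starRingEnd ℂ) φ₂ + ψ₂ * φ₁),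
        ψ₂ * (starRingEnd ℂ) φ₂ - (starRingEnd ℂ) ψ₁ * φ₁,
        I * ((starRingEnd ℂ) ψ₁ * φ₁ + ψ₂ * (starRingEnd ℂ) φ₂)] := by
  have hs : (√(weierE2a ψ₁ ψ₂ φ₁ φ₂) : ℂ) ≠ 0 := ofReal_ne_zero.mpr (Real.sqrt_pos.mpr h).ne'
  have hcancel (a b : ℝ) : (√(weierE2a ψ₁ ψ₂ φ₁ φ₂) : ℂ) *
      (((√(weierE2a ψ₁ ψ₂ φ₁ φ₂))⁻¹ * a : ℝ) + I * ((√(weierE2a ψ₁ ψ₂ φ₁ φ₂))⁻¹ * b : ℝ))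
      = a + I * b := by
    push_cast
    field_simp
  funext k
  rw [weierP, weierN1, weierN2, hcancel]
  fin_cases k <;> apply Complex.ext <;> simp

lemma sum_weierXzzb_mul_weierP (u ψ₁ ψ₂ φ₁ φ₂ : ℂ) (h : 0 < weierE2a ψ₁ ψ₂ φ₁ φ₂) :
    ∑ k, weierXzzb u ψ₁ ψ₂ φ₁ φ₂ k * weierP ψ₁ ψ₂ φ₁ φ₂ k = u * weierE2a ψ₁ ψ₂ φ₁ φ₂ := by
  simp only [weierXzzb, weierP_eq h, weierVec, weierE2a, Fin.sum_univ_four, ofReal_mul, ofReal_add,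
    ← mul_conj, cons_val_zero, cons_val_one, cons_val_two, cons_val_three, head_cons, tail_cons]
  ring_nf
  simp only [I_sq]
  ring

theorem potential_is_half_H_dot_p_general
    (Ω : Set ℂ) (hΩ : IsOpen Ω) (U ψ₁ ψ₂ φ₁ φ₂ : ℂ → ℂ)
    (hψ₁ : ∀ z ∈ Ω, DifferentiableAt ℝ ψ₁ z)
    (hψ₂ : ∀ z ∈ Ω, DifferentiableAt ℝ ψ₂ z)
    (hφ₁ : ∀ z ∈ Ω, DifferentiableAt ℝ φ₁ z)
    (hφ₂ : ∀ z ∈ Ω, DifferentiableAt ℝ φ₂ z)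
    (hψ : DiracEq U ψ₁ ψ₂ Ω)
    (hφ : DiracEq (fun z => (starRingEnd ℂ) (U z)) φ₁ φ₂ Ω)
    (x : ℂ → Fin 4 → ℝ)
    (hx : ∀ z ∈ Ω, ∀ k : Fin 4,
      wdz (fun w => ((x w k : ℝ) : ℂ)) z = weierXz (ψ₁ z) (ψ₂ z) (φ₁ z) (φ₂ z) k)
    (hpos : ∀ z ∈ Ω, 0 < weierE2a (ψ₁ z) (ψ₂ z) (φ₁ z) (φ₂ z)) :
    ∀ z ∈ Ω,
      U z = (1 / 2) * ∑ k : Fin 4,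
        ((2 / (weierE2a (ψ₁ z) (ψ₂ z) (φ₁ z) (φ₂ z) : ℝ) : ℂ) *
            wdzb (fun w => wdz (fun v => ((x v k : ℝ) : ℂ)) w) z) *
          weierP (ψ₁ z) (ψ₂ z) (φ₁ z) (φ₂ z) k := by
  intro z hz
  have hE := hpos z hz
  have hxz (k : Fin 4) : wdzb (fun w => wdz (fun v => ((x v k : ℝ) : ℂ)) w) z
      = wdzb (fun w => weierXz (ψ₁ w) (ψ₂ w) (φ₁ w) (φ₂ w) k) z :=
    wdzb_congr (Filter.eventually_of_mem (hΩ.mem_nhds hz) fun w hw => hx w hw k)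
  simp_rw [hxz, mul_assoc, ← mul_sum,
    wdzb_weierXz hψ hφ hz (hψ₁ z hz) (hψ₂ z hz) (hφ₁ z hz) (hφ₂ z hz),
    sum_weierXzzb_mul_weierP _ _ _ _ _ hE]
  have hE' : (weierE2a (ψ₁ z) (ψ₂ z) (φ₁ z) (φ₂ z) : ℂ) ≠ 0 := ofReal_ne_zero.mpr hE.ne'
  field_simp

/-- the potential and the mean curvature vector: `U = ½⟨H, p⟩`, where
`H = 2 e^{−2α} ∂̄∂x` is the mean curvature vector of the Weierstrass surface `x` and
`p = e^α(n₁ + i n₂)` is the complex normal vector. -/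
theorem potential_is_half_H_dot_p
    (Ω : Set ℂ) (hΩ : IsOpen Ω) (U ψ₁ ψ₂ φ₁ φ₂ : ℂ → ℂ)
    (hψ₁ : ∀ z ∈ Ω, DifferentiableAt ℝ ψ₁ z)
    (hψ₂ : ∀ z ∈ Ω, DifferentiableAt ℝ ψ₂ z)
    (hφ₁ : ∀ z ∈ Ω, DifferentiableAt ℝ φ₁ z)
    (hφ₂ : ∀ z ∈ Ω, DifferentiableAt ℝ φ₂ z)
    (hψ : DiracEq U ψ₁ ψ₂ Ω)
    (hφ : DiracEq (fun z => (starRingEnd ℂ) (U z)) φ₁ φ₂ Ω)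
    (x : ℂ → Fin 4 → ℝ)
    (hx : ∀ z ∈ Ω, ∀ k : Fin 4,
      wdz (fun w => ((x w k : ℝ) : ℂ)) z = weierXz (ψ₁ z) (ψ₂ z) (φ₁ z) (φ₂ z) k)
    (hxdiff : ∀ z ∈ Ω, ∀ k : Fin 4, DifferentiableAt ℝ (fun w => ((x w k : ℝ) : ℂ)) z)
    (hxdiff2 : ∀ z ∈ Ω, ∀ k : Fin 4,
      DifferentiableAt ℝ (fun w => wdz (fun v => ((x v k : ℝ) : ℂ)) w) z)
    (hpos : ∀ z ∈ Ω, 0 < weierE2a (ψ₁ z) (ψ₂ z) (φ₁ z) (φ₂ z)) :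
    ∀ z ∈ Ω,
      U z = (1 / 2) * ∑ k : Fin 4,
        ((2 / (weierE2a (ψ₁ z) (ψ₂ z) (φ₁ z) (φ₂ z) : ℝ) : ℂ) *
            wdzb (fun w => wdz (fun v => ((x v k : ℝ) : ℂ)) w) z) *
          weierP (ψ₁ z) (ψ₂ z) (φ₁ z) (φ₂ z) k :=
  potential_is_half_H_dot_p_general Ω hΩ U ψ₁ ψ₂ φ₁ φ₂ hψ₁ hψ₂ hφ₁ hφ₂ hψ hφ x hx hpos
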